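/- Let $n \ge 1$, cells of constant width $\Delta L > 0$ with boundaries $l_i = (i-1)\Delta L$, and $H \in \mathbb{Z}_{\ge 0}$. Suppose $P(z|e_j)$ is the uniform density on $[l_j - H\Delta L,\, l_{j+1} + H\Delta L]$ (of total width $(2H+1)\Delta L$). Then for each $j$ and $k$, $\int_{l_k}^{l_{k+1}} P(z|e_j)\,dz = \frac{1}{2H+1}$ if $|k - j| \le H$ and $0$ otherwise, and consequently $\sum_{j=0}^n P(e_j) \sum_{k=1}^n C_k \int_{l_k}^{l_{k+1}} P(z|e_j)\,dz = \sum_{j=0}^n P(e_j)\, \frac{D_{j+H} - D_{j-H-1}}{2H+1}$, where $D_i = \sum_{1 \le k \le \min(i,n)} C_k$ for $i \ge 1$ and $D_i = 0$ for $i \le 0$. -/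

import Mathlib

/-!
A cell `[l k, l (k+1)]` of the grid either lies inside the support of the uniform density
`p j`, which is itself a union of `2H + 1` consecutive cells, or meets it in at most one point,
so its probability mass is `1 / (2H + 1)` or `0`. Summing `C k` against these masses picks out
the window `j - H ≤ k ≤ j + H`, a difference of two prefix sums.
-/

open MeasureTheory Set Finset

theorem intervalIntegral_indicator_Icc_const {x y : ℝ} (hxy : x ≤ y) (a b c : ℝ) :
    ∫ z in x..y, (Icc a b).indicator (fun _ ↦ c) z = volume.real (Icc a b ∩ Ioc x y) * c := by
  rw [intervalIntegral.integral_of_le hxy, integral_indicator_const _ measurableSet_Icc,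
    measureReal_restrict_apply measurableSet_Icc, smul_eq_mul]

theorem intervalIntegral_cell_indicator_Icc (a c : ℝ) {ΔL : ℝ} (hΔL : 0 < ΔL) (k m M : ℤ) :
    ∫ z in a + k * ΔL..a + (k + 1) * ΔL, (Icc (a + m * ΔL) (a + M * ΔL)).indicator (fun _ ↦ c) z
      = if m ≤ k ∧ k < M then ΔL * c else 0 := by
  rw [intervalIntegral_indicator_Icc_const (by nlinarith)]
  split_ifs with hk
  · obtain ⟨hmk, hkM⟩ := hk
    have hmk' : (m : ℝ) ≤ k := by exact_mod_cast hmk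
    have hkM' : (k : ℝ) + 1 ≤ M := by exact_mod_cast hkM
    have hsub : Ioc (a + k * ΔL) (a + (k + 1) * ΔL) ⊆ Icc (a + m * ΔL) (a + M * ΔL) :=
      Ioc_subset_Icc_self.trans (Icc_subset_Icc (by nlinarith) (by nlinarith))
    rw [inter_eq_right.2 hsub, Real.volume_real_Ioc_of_le (by nlinarith)]
    ring
  · rw [not_and_or, not_le, not_lt] at hk
    suffices volume.real (Icc (a + m * ΔL) (a + M * ΔL) ∩ Ioc (a + k * ΔL) (a + (k + 1) * ΔL)) = 0
      by rw [this, zero_mul]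
    rcases hk with hkm | hMk
    · have hkm' : (k : ℝ) + 1 ≤ m := by exact_mod_cast hkm
      refine measureReal_mono_null (s₂ := Icc (a + m * ΔL) (a + (k + 1) * ΔL))
        (fun z hz ↦ ⟨hz.1.1, hz.2.2⟩) ?_ measure_Icc_lt_top.ne
      rw [Real.volume_real_Icc, max_eq_right (by nlinarith)]
    · have hMk' : (M : ℝ) ≤ k := by exact_mod_cast hMk
      refine measureReal_mono_null (s₂ := Icc (a + k * ΔL) (a + M * ΔL))
        (fun z hz ↦ ⟨hz.2.1.le, hz.1.2⟩) ?_ measure_Icc_lt_top.ne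
      rw [Real.volume_real_Icc, max_eq_right (by nlinarith)]

theorem intervalIntegral_cell_uniform_window (a : ℝ) {ΔL : ℝ} (hΔL : 0 < ΔL) (H : ℕ) (j k : ℤ) :
    ∫ z in a + k * ΔL..a + (k + 1) * ΔL,
        (Icc (a + ((j - H : ℤ) : ℝ) * ΔL) (a + ((j + H + 1 : ℤ) : ℝ) * ΔL)).indicator
          (fun _ ↦ (((2 * H + 1 : ℕ) : ℝ) * ΔL)⁻¹) z
      = if |k - j| ≤ H then ((2 * H + 1 : ℕ) : ℝ)⁻¹ else 0 := by
  rw [intervalIntegral_cell_indicator_Icc _ _ hΔL]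
  refine if_congr ?_ (by field_simp) rfl
  rw [abs_sub_le_iff]
  omega

theorem sum_ite_abs_sub_le_eq_sub {M : Type*} [AddCommGroup M] (s : Finset ℕ) (C : ℕ → M)
    (j : ℤ) (H : ℕ) :
    ∑ k ∈ s, (if |(k : ℤ) - j| ≤ H then C k else 0)
      = ∑ k ∈ s, (if (k : ℤ) ≤ j + H then C k else 0)
        - ∑ k ∈ s, (if (k : ℤ) ≤ j - H - 1 then C k else 0) := by
  rw [← sum_sub_distrib]
  refine sum_congr rfl fun k _ ↦ ?_
  simp only [abs_le]
  split_ifs <;> first | omega | simp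

theorem stmt_6_general (n : ℕ) (ΔL : ℝ) (hΔL : 0 < ΔL) (H : ℕ)
    (l : ℕ → ℝ) (hldef : ∀ i, l i = ((i : ℝ) - 1) * ΔL)
    (p : ℕ → ℝ → ℝ)
    (hp : ∀ j z, p j z =
      if l j - (H : ℝ) * ΔL ≤ z ∧ z ≤ l (j + 1) + (H : ℝ) * ΔL
      then (((2 * H + 1 : ℕ) : ℝ) * ΔL)⁻¹ else 0)
    (Pe : ℕ → ℝ)
    (C : ℕ → ℝ) (D : ℤ → ℝ)
    (hD : ∀ i : ℤ, D i = ∑ k ∈ Finset.Icc 1 n, if (k : ℤ) ≤ i then C k else 0) :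
    (∀ j, j ≤ n → ∀ k, 1 ≤ k → k ≤ n →
        (∫ z in (l k)..(l (k + 1)), p j z)
          = if |(k : ℤ) - (j : ℤ)| ≤ (H : ℤ) then ((2 * H + 1 : ℕ) : ℝ)⁻¹ else 0) ∧
      ∑ j ∈ Finset.range (n + 1),
          Pe j * ∑ k ∈ Finset.Icc 1 n, C k * ∫ z in (l k)..(l (k + 1)), p j z
        = ∑ j ∈ Finset.range (n + 1),
            Pe j * (D ((j : ℤ) + H) - D ((j : ℤ) - H - 1)) / ((2 * H + 1 : ℕ) : ℝ) := by
  have hcell : ∀ j k : ℕ, (∫ z in (l k)..(l (k + 1)), p j z)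
      = if |(k : ℤ) - (j : ℤ)| ≤ (H : ℤ) then ((2 * H + 1 : ℕ) : ℝ)⁻¹ else 0 := by
    intro j k
    have hpj : p j = (Icc (-ΔL + ((j - H : ℤ) : ℝ) * ΔL) (-ΔL + ((j + H + 1 : ℤ) : ℝ) * ΔL)).indicator
        (fun _ ↦ (((2 * H + 1 : ℕ) : ℝ) * ΔL)⁻¹) := by
      ext z
      rw [hp, hldef, hldef]
      simp only [indicator_apply, Set.mem_Icc]
      congr 1
      push_cast
      apply propext
      constructor <;> rintro ⟨h₁, h₂⟩ <;> constructor <;> linarith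
    have hlk : l k = -ΔL + ((k : ℤ) : ℝ) * ΔL := by rw [hldef]; push_cast; ring
    have hlk' : l (k + 1) = -ΔL + (((k : ℤ) : ℝ) + 1) * ΔL := by rw [hldef]; push_cast; ring
    rw [hpj, hlk, hlk', intervalIntegral_cell_uniform_window _ hΔL]
  refine ⟨fun j _ k _ _ ↦ hcell j k, sum_congr rfl fun j _ ↦ ?_⟩
  have hwindow : ∑ k ∈ Finset.Icc 1 n,
        C k * (if |(k : ℤ) - (j : ℤ)| ≤ (H : ℤ) then ((2 * H + 1 : ℕ) : ℝ)⁻¹ else 0)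
      = (D ((j : ℤ) + H) - D ((j : ℤ) - H - 1)) * ((2 * H + 1 : ℕ) : ℝ)⁻¹ := by
    rw [hD, hD, ← sum_ite_abs_sub_le_eq_sub, sum_mul]
    refine sum_congr rfl fun k _ ↦ ?_
    split_ifs <;> simp
  simp only [hcell, hwindow, div_eq_mul_inv, mul_assoc]

theorem stmt_6 (n : ℕ) (hn : 1 ≤ n) (ΔL : ℝ) (hΔL : 0 < ΔL) (H : ℕ)
    (l : ℕ → ℝ) (hldef : ∀ i, l i = ((i : ℝ) - 1) * ΔL)
    (p : ℕ → ℝ → ℝ)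
    (hp : ∀ j z, p j z =
      if l j - (H : ℝ) * ΔL ≤ z ∧ z ≤ l (j + 1) + (H : ℝ) * ΔL
      then (((2 * H + 1 : ℕ) : ℝ) * ΔL)⁻¹ else 0)
    (Pe : ℕ → ℝ) (hPe : ∀ j, j ≤ n → 0 ≤ Pe j)
    (C : ℕ → ℝ) (D : ℤ → ℝ)
    (hD : ∀ i : ℤ, D i = ∑ k ∈ Finset.Icc 1 n, if (k : ℤ) ≤ i then C k else 0) :
    (∀ j, j ≤ n → ∀ k, 1 ≤ k → k ≤ n →
        (∫ z in (l k)..(l (k + 1)), p j z)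
          = if |(k : ℤ) - (j : ℤ)| ≤ (H : ℤ) then ((2 * H + 1 : ℕ) : ℝ)⁻¹ else 0) ∧
      ∑ j ∈ Finset.range (n + 1),
          Pe j * ∑ k ∈ Finset.Icc 1 n, C k * ∫ z in (l k)..(l (k + 1)), p j z
        = ∑ j ∈ Finset.range (n + 1),
            Pe j * (D ((j : ℤ) + H) - D ((j : ℤ) - H - 1)) / ((2 * H + 1 : ℕ) : ℝ) :=
  stmt_6_general n ΔL hΔL H l hldef p hp Pe C D hD
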